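/- arXiv:2112.03422 — 3 statements merged into one kernel-verified Lean document; each statement's English description precedes it below -/
import Mathlib

section
/- Let p be a prime and let k, ℓ ≥ 0 be integers. Then the number of subgroups of the abelian group ℤ/pᵏℤ × ℤ/pˡℤ equals Σ_{j=0}^{min(k,ℓ)} φ(pʲ)·(k − j + 1)·(ℓ − j + 1), where φ denotes Euler's totient function. -/
open AddSubgroup Finset

private lemma aux_pow_sum {p : ℕ} (hp : p.Prime) (m : ℕ) :
    p ^ m = ∑ j ∈ Finset.range (m + 1), Nat.totient (p ^ j) := by
  induction m with
  | zero => simp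
  | succ m ih =>
    rw [Finset.sum_range_succ, ← ih, Nat.totient_prime_pow hp (Nat.succ_pos m)]
    have hp1 : 1 + (p - 1) = p := by have := hp.pos; omega
    calc p ^ (m + 1) = p ^ m * (1 + (p - 1)) := by rw [hp1, pow_succ]
      _ = p ^ m + p ^ m * (p - 1) := by ring

private lemma aux_count (c n j : ℕ) (hj : j ≤ n) :
    (∑ b ∈ Finset.range (n + 1), if j ≤ b then c else 0) = c * (n - j + 1) := by
  have hfil : (Finset.range (n + 1)).filter (fun b => j ≤ b) = Finset.Ico j (n + 1) := by
    ext b; simp [Nat.lt_succ_iff, and_comm]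
  rw [← Finset.sum_filter, hfil, Finset.sum_const, Nat.card_Ico, smul_eq_mul]
  have : n + 1 - j = n - j + 1 := by omega
  rw [this, mul_comm]

private lemma aux_identity {p : ℕ} (hp : p.Prime) (k l : ℕ) :
    ∑ a ∈ Finset.range (k + 1), ∑ b ∈ Finset.range (l + 1), p ^ min a b
      = ∑ j ∈ Finset.range (min k l + 1),
          Nat.totient (p ^ j) * (k - j + 1) * (l - j + 1) := by
  have step1 : ∀ a ∈ Finset.range (k + 1), ∀ b ∈ Finset.range (l + 1),
      p ^ min a b = ∑ j ∈ Finset.range (min k l + 1),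
        if j ≤ min a b then Nat.totient (p ^ j) else 0 := by
    intro a ha b hb
    simp only [Finset.mem_range, Nat.lt_succ_iff] at ha hb
    calc p ^ min a b
        = ∑ j ∈ Finset.range (min a b + 1),
            (if j ≤ min a b then Nat.totient (p ^ j) else 0) := by
          rw [aux_pow_sum hp (min a b)]
          apply Finset.sum_congr rfl
          intro j hj
          simp only [Finset.mem_range, Nat.lt_succ_iff] at hj
          simp [hj]
      _ = _ := by
          apply Finset.sum_subset
          · apply Finset.range_subset_range.2; omega
          · intro x _ hx
            simp only [Finset.mem_range, Nat.lt_succ_iff] at hx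
            simp only [ite_eq_right_iff]
            intro hle; omega
  rw [Finset.sum_congr rfl fun a ha =>
    Finset.sum_congr rfl fun b hb => step1 a ha b hb]
  rw [Finset.sum_congr rfl fun a _ => Finset.sum_comm, Finset.sum_comm]
  apply Finset.sum_congr rfl
  intro j hj
  simp only [Finset.mem_range, Nat.lt_succ_iff] at hj
  have hjk : j ≤ k := le_trans hj (min_le_left _ _)
  have hjl : j ≤ l := le_trans hj (min_le_right _ _)
  have hsplit : ∀ a b : ℕ, (if j ≤ min a b then Nat.totient (p ^ j) else 0)
      = (if j ≤ b then (if j ≤ a then Nat.totient (p ^ j) else 0) else 0) := by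
    intro a b
    by_cases h1 : j ≤ a <;> by_cases h2 : j ≤ b <;> simp [h1, h2, le_min_iff]
  calc ∑ a ∈ Finset.range (k + 1), ∑ b ∈ Finset.range (l + 1),
        (if j ≤ min a b then Nat.totient (p ^ j) else 0)
      = ∑ a ∈ Finset.range (k + 1),
          (if j ≤ a then Nat.totient (p ^ j) else 0) * (l - j + 1) := by
        apply Finset.sum_congr rfl
        intro a _
        rw [Finset.sum_congr rfl fun b _ => hsplit a b, aux_count _ _ _ hjl]
    _ = (∑ a ∈ Finset.range (k + 1),
          (if j ≤ a then Nat.totient (p ^ j) else 0)) * (l - j + 1) := by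
        rw [Finset.sum_mul]
    _ = Nat.totient (p ^ j) * (k - j + 1) * (l - j + 1) := by
        rw [aux_count _ _ _ hjk]

private lemma mem_cp {N M : ℕ} (g1 : ZMod N) (g2 h2 : ZMod M) (x : ZMod N × ZMod M) :
    x ∈ AddSubgroup.closure ({(g1, g2), ((0 : ZMod N), h2)} : Set (ZMod N × ZMod M)) ↔
      ∃ s w : ℤ, x.1 = (s : ZMod N) * g1 ∧ x.2 = (s : ZMod M) * g2 + (w : ZMod M) * h2 := by
  rw [AddSubgroup.mem_closure_pair]
  constructor
  · rintro ⟨s, w, h⟩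
    refine ⟨s, w, ?_, ?_⟩
    · rw [← h]; simp [zsmul_eq_mul]
    · rw [← h]; simp [zsmul_eq_mul]
  · rintro ⟨s, w, h1, h2⟩
    refine ⟨s, w, ?_⟩
    have : x = (x.1, x.2) := rfl
    rw [this, h1, h2]
    simp [Prod.ext_iff, zsmul_eq_mul]

private lemma zmod_subgroup_classify {p : ℕ} (hp : p.Prime) (k : ℕ)
    (H : AddSubgroup (ZMod (p ^ k))) :
    ∃ a, a ≤ k ∧ H = zmultiples (((p : ℕ) ^ a : ℕ) : ZMod (p ^ k)) := by
  obtain ⟨d, hd⟩ := Int.subgroup_cyclic (H.comap (Int.castAddHom (ZMod (p ^ k))))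
  rw [← AddSubgroup.zmultiples_eq_closure] at hd
  have hdvd : d ∣ (p ^ k : ℤ) := by
    rw [← Int.mem_zmultiples_iff, ← hd]
    have hz : (((p ^ k : ℤ)) : ZMod (p ^ k)) = 0 := by
      exact_mod_cast ZMod.natCast_self (p ^ k)
    simp only [AddSubgroup.mem_comap, Int.coe_castAddHom, hz]
    exact zero_mem H
  have hnat : d.natAbs ∣ p ^ k := by
    have h2 := Int.natAbs_dvd_natAbs.mpr hdvd
    rwa [Int.natAbs_pow, Int.natAbs_natCast] at h2
  obtain ⟨a, hak, hda⟩ := (Nat.dvd_prime_pow hp).mp hnat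
  refine ⟨a, hak, ?_⟩
  have hsurj : Function.Surjective (Int.castAddHom (ZMod (p ^ k))) :=
    ZMod.intCast_surjective
  rw [← AddSubgroup.map_comap_eq_self_of_surjective hsurj H, hd,
    AddMonoidHom.map_zmultiples]
  rcases Int.natAbs_eq d with h | h <;> rw [h]
  · simp only [Int.coe_castAddHom, Int.cast_natCast, hda]
  · simp only [Int.coe_castAddHom, Int.cast_neg, Int.cast_natCast,
      AddSubgroup.zmultiples_neg, hda]

private lemma card_zmultiples_pow {p : ℕ} (hp : p.Prime) {k a : ℕ} (ha : a ≤ k) :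
    Nat.card (zmultiples ((p ^ a : ℕ) : ZMod (p ^ k))) = p ^ (k - a) := by
  rw [Nat.card_zmultiples, ZMod.addOrderOf_coe _ (pow_ne_zero _ hp.ne_zero)]
  rw [Nat.gcd_eq_right (pow_dvd_pow p ha), Nat.pow_div ha hp.pos]

private lemma zmult_inj {p : ℕ} (hp : p.Prime) {k a a' : ℕ} (ha : a ≤ k) (ha' : a' ≤ k)
    (h : zmultiples ((p ^ a : ℕ) : ZMod (p ^ k))
        = zmultiples ((p ^ a' : ℕ) : ZMod (p ^ k))) : a = a' := by
  have hc : Nat.card (zmultiples ((p ^ a : ℕ) : ZMod (p ^ k)))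
      = Nat.card (zmultiples ((p ^ a' : ℕ) : ZMod (p ^ k))) := by rw [h]
  rw [card_zmultiples_pow hp ha, card_zmultiples_pow hp ha'] at hc
  have := Nat.pow_right_injective hp.two_le hc
  omega

private def Bsub (p k l a b t : ℕ) : AddSubgroup (ZMod (p ^ k) × ZMod (p ^ l)) :=
  closure {(((p ^ a : ℕ) : ZMod (p ^ k)), ((p ^ (b - min (k - a) b) * t : ℕ) : ZMod (p ^ l))),
           ((0 : ZMod (p ^ k)), ((p ^ b : ℕ) : ZMod (p ^ l)))}

private lemma mem_Bsub {p k l a b t : ℕ} (x : ZMod (p ^ k) × ZMod (p ^ l)) :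
    x ∈ Bsub p k l a b t ↔ ∃ s w : ℤ,
      x.1 = (s : ZMod (p ^ k)) * ((p ^ a : ℕ) : ZMod (p ^ k)) ∧
      x.2 = (s : ZMod (p ^ l)) * ((p ^ (b - min (k - a) b) * t : ℕ) : ZMod (p ^ l))
            + (w : ZMod (p ^ l)) * ((p ^ b : ℕ) : ZMod (p ^ l)) := by
  exact mem_cp _ _ _ x

private lemma comap_inr_Bsub {p : ℕ} (hp : p.Prime) {k l a b : ℕ} (ha : a ≤ k) (hb : b ≤ l)
    (t : ℕ) (y : ZMod (p ^ l)) :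
    ((0 : ZMod (p ^ k)), y) ∈ Bsub p k l a b t ↔
      y ∈ zmultiples ((p ^ b : ℕ) : ZMod (p ^ l)) := by
  haveI : NeZero (p ^ k) := ⟨pow_ne_zero _ hp.ne_zero⟩
  rw [AddSubgroup.mem_zmultiples_iff, mem_Bsub]
  constructor
  · rintro ⟨s, w, h1, h2⟩
    have h1' : (0 : ZMod (p ^ k)) = (s : ZMod (p ^ k)) * ((p ^ a : ℕ) : ZMod (p ^ k)) := h1
    have hz : ((s * (p : ℤ) ^ a : ℤ) : ZMod (p ^ k)) = 0 := by
      push_cast at h1' ⊢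
      exact h1'.symm
    rw [ZMod.intCast_zmod_eq_zero_iff_dvd] at hz
    have hpk : ((p ^ k : ℕ) : ℤ) = (p : ℤ) ^ (k - a) * (p : ℤ) ^ a := by
      push_cast
      rw [← pow_add]
      congr 1
      omega
    rw [hpk] at hz
    have hpa : ((p : ℤ) ^ a) ≠ 0 := pow_ne_zero _ (by exact_mod_cast hp.ne_zero)
    have hs : (p : ℤ) ^ (k - a) ∣ s := (mul_dvd_mul_iff_right hpa).1 hz
    obtain ⟨s', rfl⟩ := hs
    set m := min (k - a) b with hm
    have hexp : (k - a) + (b - m) - b + b = (k - a) + (b - m) := by omega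
    refine ⟨s' * (p : ℤ) ^ ((k - a) + (b - m) - b) * t + w, ?_⟩
    rw [zsmul_eq_mul, show y = _ from h2]
    have key : ((p : ZMod (p ^ l))) ^ ((k - a) + (b - m) - b) * ((p : ZMod (p ^ l))) ^ b
        = ((p : ZMod (p ^ l))) ^ (k - a) * ((p : ZMod (p ^ l))) ^ (b - m) := by
      rw [← pow_add, ← pow_add, hexp]
    push_cast
    linear_combination ((s' : ZMod (p ^ l)) * (t : ZMod (p ^ l))) * key
  · rintro ⟨w, rfl⟩
    refine ⟨0, w, ?_, ?_⟩
    · simp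
    · simp [zsmul_eq_mul]

private lemma map_fst_Bsub {p k l a b t : ℕ} (u : ZMod (p ^ k)) :
    (∃ v, ((u, v) ∈ Bsub p k l a b t)) ↔ u ∈ zmultiples ((p ^ a : ℕ) : ZMod (p ^ k)) := by
  rw [AddSubgroup.mem_zmultiples_iff]
  constructor
  · rintro ⟨v, hv⟩
    obtain ⟨s, w, h1, -⟩ := (mem_Bsub _).1 hv
    exact ⟨s, by rw [zsmul_eq_mul, ← h1]⟩
  · rintro ⟨s, rfl⟩
    refine ⟨(s : ZMod (p ^ l)) * ((p ^ (b - min (k - a) b) * t : ℕ) : ZMod (p ^ l)), ?_⟩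
    rw [mem_Bsub]
    exact ⟨s, 0, by simp [zsmul_eq_mul], by simp⟩


private lemma Bsub_inj {p : ℕ} (hp : p.Prime) {k l a b a' b' t t' : ℕ}
    (hak : a ≤ k) (hbl : b ≤ l) (hak' : a' ≤ k) (hbl' : b' ≤ l)
    (ht : t < p ^ min (k - a) b) (ht' : t' < p ^ min (k - a') b')
    (h : Bsub p k l a b t = Bsub p k l a' b' t') :
    a = a' ∧ b = b' ∧ t = t' := by
  haveI : NeZero (p ^ l) := ⟨pow_ne_zero _ hp.ne_zero⟩
  have haa : a = a' := by
    apply zmult_inj hp hak hak'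
    ext u
    rw [← map_fst_Bsub (p := p) (k := k) (l := l) (a := a) (b := b) (t := t) u, h,
      map_fst_Bsub u]
  have hbb : b = b' := by
    apply zmult_inj hp hbl hbl'
    ext y
    rw [← comap_inr_Bsub hp hak hbl t y, h, comap_inr_Bsub hp hak' hbl' t' y]
  subst haa; subst hbb
  refine ⟨rfl, rfl, ?_⟩
  have hg1 : (((p ^ a : ℕ) : ZMod (p ^ k)),
      ((p ^ (b - min (k - a) b) * t : ℕ) : ZMod (p ^ l))) ∈ Bsub p k l a b t' := by
    rw [← h]
    exact AddSubgroup.subset_closure (Set.mem_insert _ _)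
  have hg2 : (((p ^ a : ℕ) : ZMod (p ^ k)),
      ((p ^ (b - min (k - a) b) * t' : ℕ) : ZMod (p ^ l))) ∈ Bsub p k l a b t' :=
    AddSubgroup.subset_closure (Set.mem_insert _ _)
  have hdiff := AddSubgroup.sub_mem _ hg1 hg2
  have hdiff' : ((0 : ZMod (p ^ k)),
      ((p ^ (b - min (k - a) b) * t : ℕ) : ZMod (p ^ l))
        - ((p ^ (b - min (k - a) b) * t' : ℕ) : ZMod (p ^ l))) ∈ Bsub p k l a b t' := by
    simpa [Prod.mk_sub_mk, sub_self] using hdiff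
  rw [comap_inr_Bsub hp hak hbl t', AddSubgroup.mem_zmultiples_iff] at hdiff'
  obtain ⟨w, hw⟩ := hdiff'
  rw [zsmul_eq_mul] at hw
  have hz : (((p ^ (b - min (k - a) b) * t : ℤ) - (p ^ (b - min (k - a) b) * t' : ℤ)
      - w * p ^ b : ℤ) : ZMod (p ^ l)) = 0 := by
    push_cast
    push_cast at hw
    linear_combination -hw
  rw [ZMod.intCast_zmod_eq_zero_iff_dvd] at hz
  have hbdvd : ((p : ℤ)) ^ b ∣ (p ^ (b - min (k - a) b) * t : ℤ)
      - (p ^ (b - min (k - a) b) * t' : ℤ) := by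
    have hlb : ((p : ℤ)) ^ b ∣ ((p ^ l : ℕ) : ℤ) := by
      push_cast; exact pow_dvd_pow _ hbl
    have h1 := dvd_trans hlb hz
    have h2 : ((p : ℤ)) ^ b ∣ w * p ^ b := dvd_mul_left _ _
    simpa using dvd_add h1 h2
  have hsplit : ((p : ℤ)) ^ (b - min (k - a) b) * (p : ℤ) ^ (min (k - a) b) = (p : ℤ) ^ b := by
    rw [← pow_add]; congr 1; omega
  have hfac : (p ^ (b - min (k - a) b) * t : ℤ) - (p ^ (b - min (k - a) b) * t' : ℤ)
      = (p : ℤ) ^ (b - min (k - a) b) * ((t : ℤ) - t') := by push_cast; ring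
  rw [hfac, ← hsplit] at hbdvd
  have hpbm : ((p : ℤ)) ^ (b - min (k - a) b) ≠ 0 :=
    pow_ne_zero _ (by exact_mod_cast hp.ne_zero)
  have hmdvd : ((p : ℤ)) ^ (min (k - a) b) ∣ (t : ℤ) - t' :=
    (mul_dvd_mul_iff_left hpbm).1 hbdvd
  have hb1 : (t : ℤ) < (p : ℤ) ^ (min (k - a) b) := by exact_mod_cast ht
  have hb2 : (t' : ℤ) < (p : ℤ) ^ (min (k - a) b) := by exact_mod_cast ht'
  have habs : |(t : ℤ) - t'| < (p : ℤ) ^ (min (k - a) b) := by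
    rw [abs_sub_lt_iff]
    constructor <;> omega
  have := Int.eq_zero_of_abs_lt_dvd hmdvd habs
  omega

private lemma Bsub_surj {p : ℕ} (hp : p.Prime) {k l : ℕ}
    (H : AddSubgroup (ZMod (p ^ k) × ZMod (p ^ l))) :
    ∃ a b t : ℕ, a ≤ k ∧ b ≤ l ∧ t < p ^ min (k - a) b ∧ Bsub p k l a b t = H := by
  haveI : NeZero (p ^ k) := ⟨pow_ne_zero _ hp.ne_zero⟩
  haveI : NeZero (p ^ l) := ⟨pow_ne_zero _ hp.ne_zero⟩
  obtain ⟨a, hak, hA⟩ := zmod_subgroup_classify hp k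
    (H.map (AddMonoidHom.fst (ZMod (p ^ k)) (ZMod (p ^ l))))
  obtain ⟨b, hbl, hC⟩ := zmod_subgroup_classify hp l
    (H.comap (AddMonoidHom.inr (ZMod (p ^ k)) (ZMod (p ^ l))))
  have hinr : ∀ y : ZMod (p ^ l), ((0 : ZMod (p ^ k)), y) ∈ H ↔
      y ∈ zmultiples ((p ^ b : ℕ) : ZMod (p ^ l)) := by
    intro y
    rw [← hC]
    exact Iff.rfl
  have hxex : ∃ x, (((p ^ a : ℕ) : ZMod (p ^ k)), x) ∈ H := by
    have hmem : ((p ^ a : ℕ) : ZMod (p ^ k)) ∈ H.map (AddMonoidHom.fst _ _) := by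
      rw [hA]; exact AddSubgroup.mem_zmultiples _
    obtain ⟨⟨u, v⟩, huv, he⟩ := AddSubgroup.mem_map.1 hmem
    have heu : u = ((p ^ a : ℕ) : ZMod (p ^ k)) := he
    exact ⟨v, heu ▸ huv⟩
  obtain ⟨x, hx⟩ := hxex
  obtain ⟨X, hX⟩ := ZMod.intCast_surjective x
  have hcon : ((p ^ (k - a) : ℕ) : ZMod (p ^ l)) * x
      ∈ zmultiples ((p ^ b : ℕ) : ZMod (p ^ l)) := by
    have h1 : ((p ^ (k - a) : ℕ) : ℤ) • (((p ^ a : ℕ) : ZMod (p ^ k)), x) ∈ H :=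
      AddSubgroup.zsmul_mem _ hx _
    have hfst : ((p ^ (k - a) : ℕ) : ℤ) • ((p ^ a : ℕ) : ZMod (p ^ k)) = 0 := by
      rw [zsmul_eq_mul]
      push_cast
      rw [← pow_add, show k - a + a = k by omega]
      exact_mod_cast ZMod.natCast_self (p ^ k)
    have hsnd : ((p ^ (k - a) : ℕ) : ℤ) • x = ((p ^ (k - a) : ℕ) : ZMod (p ^ l)) * x := by
      rw [zsmul_eq_mul]; push_cast; ring
    rw [Prod.smul_mk, hfst, hsnd] at h1
    exact (hinr _).1 h1
  obtain ⟨w, hw⟩ := AddSubgroup.mem_zmultiples_iff.1 hcon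
  rw [zsmul_eq_mul] at hw
  have hz : (((p : ℤ) ^ (k - a) * X - w * p ^ b : ℤ) : ZMod (p ^ l)) = 0 := by
    push_cast
    push_cast at hw
    linear_combination (-1 : ZMod (p ^ l)) * hw + ((p : ZMod (p ^ l)) ^ (k - a)) * hX
  rw [ZMod.intCast_zmod_eq_zero_iff_dvd] at hz
  have hb2 : ((p : ℤ)) ^ b ∣ (p : ℤ) ^ (k - a) * X := by
    have hlb : ((p : ℤ)) ^ b ∣ ((p ^ l : ℕ) : ℤ) := by
      push_cast; exact pow_dvd_pow _ hbl
    have h1 := dvd_trans hlb hz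
    have h2 : ((p : ℤ)) ^ b ∣ w * p ^ b := dvd_mul_left _ _
    simpa using dvd_add h1 h2
  have hXdvd : ((p : ℤ)) ^ (b - min (k - a) b) ∣ X := by
    rcases le_total (k - a) b with hca | hca
    · have hsplit : ((p : ℤ)) ^ b
          = (p : ℤ) ^ (b - min (k - a) b) * (p : ℤ) ^ (k - a) := by
        rw [← pow_add]; congr 1; omega
      rw [hsplit] at hb2
      have hpka : ((p : ℤ)) ^ (k - a) ≠ 0 := pow_ne_zero _ (by exact_mod_cast hp.ne_zero)
      have hb3 : ((p : ℤ)) ^ (k - a) * ((p : ℤ) ^ (b - min (k - a) b))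
          ∣ (p : ℤ) ^ (k - a) * X := by
        rwa [mul_comm ((p : ℤ) ^ (k - a))]
      exact (mul_dvd_mul_iff_left hpka).1 hb3
    · have hz0 : b - min (k - a) b = 0 := by omega
      rw [hz0, pow_zero]
      exact one_dvd _
  obtain ⟨Y, hY⟩ := hXdvd
  have hpm : (0 : ℤ) < (p : ℤ) ^ (min (k - a) b) :=
    pow_pos (by exact_mod_cast hp.pos) _
  have hlt : Y % (p : ℤ) ^ (min (k - a) b) < (p : ℤ) ^ (min (k - a) b) :=
    Int.emod_lt_of_pos _ hpm
  have hge : 0 ≤ Y % (p : ℤ) ^ (min (k - a) b) := Int.emod_nonneg _ (ne_of_gt hpm)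
  have hPc : ((p ^ (min (k - a) b) : ℕ) : ℤ) = (p : ℤ) ^ (min (k - a) b) := by push_cast; ring
  refine ⟨a, b, (Y % (p : ℤ) ^ (min (k - a) b)).toNat, hak, hbl, by omega, ?_⟩
  have htval : (((Y % (p : ℤ) ^ (min (k - a) b)).toNat : ℤ))
      = Y % (p : ℤ) ^ (min (k - a) b) := Int.toNat_of_nonneg hge
  have htY : ((p : ℤ)) ^ (min (k - a) b)
      ∣ Y - ((Y % (p : ℤ) ^ (min (k - a) b)).toNat : ℤ) := by
    rw [htval]
    exact ⟨Y / (p : ℤ) ^ (min (k - a) b), by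
      have := Int.mul_ediv_add_emod Y ((p : ℤ) ^ (min (k - a) b)); linarith⟩
  obtain ⟨Z, hZ⟩ := htY
  have hdx : ((p ^ (b - min (k - a) b) * (Y % (p : ℤ) ^ (min (k - a) b)).toNat : ℕ)
      : ZMod (p ^ l)) - x ∈ zmultiples ((p ^ b : ℕ) : ZMod (p ^ l)) := by
    refine AddSubgroup.mem_zmultiples_iff.2 ⟨-Z, ?_⟩
    rw [zsmul_eq_mul, ← hX]
    have hXe : X = (p : ℤ) ^ (b - min (k - a) b)
        * (((Y % (p : ℤ) ^ (min (k - a) b)).toNat : ℤ) + (p : ℤ) ^ (min (k - a) b) * Z) := by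
      rw [hY]
      linear_combination (p : ℤ) ^ (b - min (k - a) b) * hZ
    rw [hXe]
    have hsplit2 : ((p : ZMod (p ^ l))) ^ (b - min (k - a) b)
        * ((p : ZMod (p ^ l))) ^ (min (k - a) b) = ((p : ZMod (p ^ l))) ^ b := by
      rw [← pow_add]; congr 1; omega
    push_cast
    linear_combination ((Z : ZMod (p ^ l))) * hsplit2
  have hg1H : ((((p ^ a : ℕ) : ZMod (p ^ k)),
      ((p ^ (b - min (k - a) b) * (Y % (p : ℤ) ^ (min (k - a) b)).toNat : ℕ)
        : ZMod (p ^ l)))) ∈ H := by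
    have h1 := AddSubgroup.add_mem _ hx ((hinr _).2 hdx)
    simpa using h1
  have hg2H : ((0 : ZMod (p ^ k)), ((p ^ b : ℕ) : ZMod (p ^ l))) ∈ H :=
    (hinr _).2 (AddSubgroup.mem_zmultiples _)
  apply le_antisymm
  · rw [Bsub, AddSubgroup.closure_le]
    intro z hz2
    simp only [Set.mem_insert_iff, Set.mem_singleton_iff] at hz2
    rcases hz2 with rfl | rfl
    · exact hg1H
    · exact hg2H
  · intro z hzH
    obtain ⟨u, v⟩ := z
    have hu : u ∈ zmultiples ((p ^ a : ℕ) : ZMod (p ^ k)) := by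
      rw [← hA]
      exact AddSubgroup.mem_map.2 ⟨(u, v), hzH, rfl⟩
    obtain ⟨s, hs⟩ := AddSubgroup.mem_zmultiples_iff.1 hu
    rw [zsmul_eq_mul] at hs
    have hsub : ((0 : ZMod (p ^ k)), v - (s : ZMod (p ^ l))
        * ((p ^ (b - min (k - a) b) * (Y % (p : ℤ) ^ (min (k - a) b)).toNat : ℕ)
          : ZMod (p ^ l))) ∈ H := by
      have h2 := AddSubgroup.sub_mem _ hzH (AddSubgroup.zsmul_mem _ hg1H s)
      have he : ((u, v) - s • ((((p ^ a : ℕ) : ZMod (p ^ k)),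
          ((p ^ (b - min (k - a) b) * (Y % (p : ℤ) ^ (min (k - a) b)).toNat : ℕ)
            : ZMod (p ^ l)))))
          = ((0 : ZMod (p ^ k)), v - (s : ZMod (p ^ l))
            * ((p ^ (b - min (k - a) b) * (Y % (p : ℤ) ^ (min (k - a) b)).toNat : ℕ)
              : ZMod (p ^ l))) := by
        rw [Prod.smul_mk, Prod.mk_sub_mk, zsmul_eq_mul, zsmul_eq_mul, hs, sub_self]
      rwa [he] at h2
    obtain ⟨w', hw'⟩ := AddSubgroup.mem_zmultiples_iff.1 ((hinr _).1 hsub)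
    rw [zsmul_eq_mul] at hw'
    refine (mem_Bsub _).2 ⟨s, w', hs.symm, ?_⟩
    linear_combination (-1 : ZMod (p ^ l)) * hw'

/-- The number of subgroups of `ℤ/pᵏℤ × ℤ/pˡℤ` is
`∑_{j=0}^{min(k,ℓ)} φ(pʲ)·(k − j + 1)·(ℓ − j + 1)`. -/
theorem card_subgroups_rank_two (p k l : ℕ) (hp : p.Prime) :
    Nat.card (AddSubgroup (ZMod (p ^ k) × ZMod (p ^ l))) =
      ∑ j ∈ Finset.range (min k l + 1),
        Nat.totient (p ^ j) * (k - j + 1) * (l - j + 1) := by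
  have hbij : Function.Bijective
      (fun σ : (Σ _a : Fin (k + 1), Σ _b : Fin (l + 1),
          Fin (p ^ min (k - (_a : ℕ)) ((_b : ℕ)))) =>
        Bsub p k l σ.1 σ.2.1 σ.2.2.val) := by
    constructor
    · rintro ⟨a, b, t⟩ ⟨a', b', t'⟩ h
      obtain ⟨h1, h2, h3⟩ := Bsub_inj hp (Nat.lt_succ_iff.1 a.isLt)
        (Nat.lt_succ_iff.1 b.isLt) (Nat.lt_succ_iff.1 a'.isLt)
        (Nat.lt_succ_iff.1 b'.isLt) t.isLt t'.isLt h
      have ha : a = a' := Fin.ext h1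
      subst ha
      have hb : b = b' := Fin.ext h2
      subst hb
      have ht : t = t' := Fin.ext h3
      subst ht
      rfl
    · intro H
      obtain ⟨a, b, t, hak, hbl, htlt, hBH⟩ := Bsub_surj hp H
      exact ⟨⟨⟨a, Nat.lt_succ_iff.2 hak⟩, ⟨b, Nat.lt_succ_iff.2 hbl⟩, ⟨t, htlt⟩⟩, hBH⟩
  rw [← Nat.card_congr (Equiv.ofBijective _ hbij), Nat.card_eq_fintype_card]
  simp only [Fintype.card_sigma, Fintype.card_fin]
  have inner : ∀ a : ℕ, (∑ b : Fin (l + 1), p ^ min (k - a) (b : ℕ))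
      = ∑ b ∈ Finset.range (l + 1), p ^ min (k - a) b :=
    fun a => Fin.sum_univ_eq_sum_range (fun b => p ^ min (k - a) b) (l + 1)
  have hconv : (∑ a : Fin (k + 1), ∑ b : Fin (l + 1), p ^ min (k - (a : ℕ)) ((b : ℕ)))
      = ∑ a ∈ Finset.range (k + 1), ∑ b ∈ Finset.range (l + 1), p ^ min (k - a) b :=
    calc (∑ a : Fin (k + 1), ∑ b : Fin (l + 1), p ^ min (k - (a : ℕ)) ((b : ℕ)))
        = ∑ a : Fin (k + 1), ∑ b ∈ Finset.range (l + 1), p ^ min (k - (a : ℕ)) b :=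
          Finset.sum_congr rfl fun a _ => inner (a : ℕ)
      _ = _ := Fin.sum_univ_eq_sum_range
          (fun a => ∑ b ∈ Finset.range (l + 1), p ^ min (k - a) b) (k + 1)
  rw [hconv]
  have hrefl : (∑ a ∈ Finset.range (k + 1), ∑ b ∈ Finset.range (l + 1), p ^ min (k - a) b)
      = ∑ a ∈ Finset.range (k + 1), ∑ b ∈ Finset.range (l + 1), p ^ min a b := by
    have := Finset.sum_range_reflect
      (fun a => ∑ b ∈ Finset.range (l + 1), p ^ min a b) (k + 1)
    simp only [Nat.add_sub_cancel] at this
    exact this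
  rw [hrefl]
  exact aux_identity hp k l
end

section
/- Let d and n be positive integers with d dividing n, let D be the unique subgroup of order d of the cyclic group ℤ/nℤ, and let S be a primitive Schur partition of D (i.e., the only subgroups of D that are unions of blocks of S are the trivial subgroup and D itself). Then the number of Schur partitions T of ℤ/nℤ such that D is a union of blocks of T, the blocks of T contained in D are exactly the blocks of S, and every block of T not contained in D is a union of cosets of D, equals Ω(n/d), the number of Schur partitions of ℤ/(n/d)ℤ. -/
/-
Let π : ℤ/nℤ → ℤ/(n/d)ℤ be a surjection with kernel D. The blocks of T outside D are unions of
D-cosets, i.e. preimages π⁻¹(B). The coefficient of g in a product of class sums counts the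
representations g = a + b: for two preimages it is d times the count for their images at π(g),
for a block inside D times π⁻¹(B) it only depends on whether π(g) ∈ B, and for two blocks inside
D it is governed by S. Hence T ↦ {0} ∪ {π(E) : E ∈ T, E ⊄ D} and
P ↦ S ∪ {π⁻¹(B) : B ∈ P, B ≠ {0}} are mutually inverse bijections onto the Schur partitions
of ℤ/(n/d)ℤ.
-/

open scoped Pointwise

noncomputable def classSum {G : Type*} [AddCommGroup G] (C : Set G) :
    AddMonoidAlgebra ℚ G :=
  ∑ᶠ g ∈ C, AddMonoidAlgebra.single g (1 : ℚ)

def IsSchurPartition {G : Type*} [AddCommGroup G] (P : Set (Set G)) : Prop :=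
  Setoid.IsPartition P ∧
  ({0} : Set G) ∈ P ∧
  (∀ C ∈ P, -C ∈ P) ∧
  ∀ C ∈ P, ∀ D ∈ P,
    classSum C * classSum D ∈ AddSubmonoid.closure (classSum '' P)

noncomputable def Omega (n : ℕ) : ℕ :=
  Nat.card {P : Set (Set (ZMod n)) // IsSchurPartition P}

/-- `A` is a union of blocks of the partition `P`: every block meeting `A` lies in `A`. -/
def IsBlockUnion {G : Type*} (P : Set (Set G)) (A : Set G) : Prop :=
  ∀ C ∈ P, (C ∩ A).Nonempty → C ⊆ A

def ConstOnBlocks {G α : Type*} (P : Set (Set G)) (f : G → α) : Prop :=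
  ∀ C ∈ P, ∀ a ∈ C, ∀ b ∈ C, f a = f b

open Classical in
lemma constOnBlocks_ite {G α : Type*} {P : Set (Set G)} (hP : Setoid.IsPartition P) {C : Set G}
    (hC : C ∈ P) (u v : α) : ConstOnBlocks P (fun g => if g ∈ C then u else v) := by
  intro E hE a ha b hb
  have hab : a ∈ C ↔ b ∈ C :=
    ⟨fun h => Setoid.eq_of_mem_eqv_class hP.2 hE ha hC h ▸ hb,
      fun h => Setoid.eq_of_mem_eqv_class hP.2 hE hb hC h ▸ ha⟩
  simp only [hab]

variable {G : Type*} [AddCommGroup G]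

noncomputable def repCount (A B : Set G) (g : G) : ℕ :=
  {a ∈ A | g - a ∈ B}.ncard

section Finite

variable [Finite G]

lemma classSum_eq_sum (C : Set G) :
    classSum C = ∑ g ∈ C.toFinite.toFinset, AddMonoidAlgebra.single g (1 : ℚ) :=
  finsum_mem_eq_finite_toFinset_sum _ C.toFinite

open Classical in
lemma classSum_coeff (C : Set G) (g : G) :
    (classSum C).coeff g = if g ∈ C then 1 else 0 := by
  simp [classSum_eq_sum, AddMonoidAlgebra.coeff_sum, Finset.sum_apply', Finsupp.single_apply]

lemma classSum_mul_coeff (A B : Set G) (g : G) :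
    (classSum A * classSum B).coeff g = repCount A B g := by
  classical
  rw [classSum_eq_sum A, Finset.sum_mul, AddMonoidAlgebra.coeff_sum, Finset.sum_apply']
  simp only [AddMonoidAlgebra.coeff_single_mul_apply, one_mul, classSum_coeff, neg_add_eq_sub]
  rw [Finset.sum_boole, repCount, ← Set.ncard_coe_finset]
  congr
  ext a
  simp

lemma mem_closure_classSum_iff {P : Set (Set G)} (hP : Setoid.IsPartition P)
    (x : AddMonoidAlgebra ℚ G) :
    x ∈ AddSubmonoid.closure (classSum '' P) ↔
      (∀ g, ∃ m : ℕ, x.coeff g = m) ∧ ConstOnBlocks P x.coeff := by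
  classical
  constructor
  · intro hx
    induction hx using AddSubmonoid.closure_induction with
    | mem y hy =>
      obtain ⟨C, hC, rfl⟩ := hy
      refine ⟨fun g => ⟨if g ∈ C then 1 else 0, by simp [classSum_coeff]⟩, ?_⟩
      simpa only [funext (classSum_coeff C)] using constOnBlocks_ite hP hC (1 : ℚ) 0
    | zero => exact ⟨fun g => ⟨0, by simp⟩, fun C _ a _ b _ => by simp⟩
    | add y z _ _ hy hz =>
      refine ⟨fun g => ?_, fun C hC a ha b hb => ?_⟩
      · obtain ⟨m₁, h₁⟩ := hy.1 g
        obtain ⟨m₂, h₂⟩ := hz.1 g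
        exact ⟨m₁ + m₂, by simp [AddMonoidAlgebra.coeff_add, h₁, h₂]⟩
      · simp [AddMonoidAlgebra.coeff_add, hy.2 C hC a ha b hb, hz.2 C hC a ha b hb]
  · rintro ⟨hnat, hconst⟩
    choose m hm using hnat
    let rep : Set G → G := fun C => Classical.epsilon (· ∈ C)
    have hx : x = ∑ C ∈ P.toFinite.toFinset, m (rep C) • classSum C := by
      ext g
      obtain ⟨Cg, ⟨hCg, hg⟩, huniq⟩ := hP.2 g
      have hrep : rep Cg ∈ Cg := Classical.epsilon_spec ⟨g, hg⟩
      rw [AddMonoidAlgebra.coeff_sum, Finset.sum_apply',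
        Finset.sum_eq_single Cg (fun C hC hne => ?_) (fun h => absurd (by simpa using hCg) h)]
      · rw [AddMonoidAlgebra.coeff_smul_apply, classSum_coeff, if_pos hg, nsmul_one, ← hm,
          hconst Cg hCg g hg _ hrep]
      · have hgC : g ∉ C := fun h => hne (huniq C ⟨by simpa using hC, h⟩)
        rw [AddMonoidAlgebra.coeff_smul_apply, classSum_coeff, if_neg hgC, smul_zero]
    rw [hx]
    exact AddSubmonoid.sum_mem _ fun C hC => AddSubmonoid.nsmul_mem _
      (AddSubmonoid.subset_closure (Set.mem_image_of_mem _ (by simpa using hC))) _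

lemma classSum_mul_mem_closure_iff {P : Set (Set G)} (hP : Setoid.IsPartition P) (A B : Set G) :
    classSum A * classSum B ∈ AddSubmonoid.closure (classSum '' P) ↔
      ConstOnBlocks P (repCount A B) := by
  simp only [mem_closure_classSum_iff hP, ConstOnBlocks, classSum_mul_coeff, Nat.cast_inj]
  exact ⟨And.right, fun h => ⟨fun g => ⟨_, rfl⟩, h⟩⟩

lemma isSchurPartition_iff {P : Set (Set G)} :
    IsSchurPartition P ↔ Setoid.IsPartition P ∧ ({0} : Set G) ∈ P ∧ (∀ C ∈ P, -C ∈ P) ∧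
      ∀ C ∈ P, ∀ D ∈ P, ConstOnBlocks P (repCount C D) := by
  rw [IsSchurPartition]
  refine and_congr_right fun hP => and_congr_right fun _ => and_congr_right fun _ => ?_
  exact forall₂_congr fun C _ => forall₂_congr fun D _ => classSum_mul_mem_closure_iff hP C D

end Finite

lemma repCount_comm (A B : Set G) (g : G) : repCount A B g = repCount B A g := by
  refine Set.ncard_congr (fun a _ => g - a) ?_ (fun a b _ _ h => by simpa using h) ?_
  · rintro a ⟨ha, hb⟩
    exact ⟨hb, by simpa using ha⟩
  · rintro b ⟨hb, ha⟩
    exact ⟨g - b, ⟨ha, by simpa using hb⟩, by simp⟩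

open Classical in
lemma repCount_singleton_zero_left (B : Set G) (g : G) :
    repCount {0} B g = if g ∈ B then 1 else 0 := by
  by_cases hg : g ∈ B
  · rw [if_pos hg, repCount, ← Set.ncard_singleton (0 : G)]
    congr 1
    ext a
    simp +contextual [hg]
  · rw [if_neg hg, repCount, ← Set.ncard_empty G]
    congr 1
    ext a
    simp +contextual [hg]

lemma repCount_eq_zero_of_notMem (K : AddSubgroup G) {A B : Set G} (hA : A ⊆ K) (hB : B ⊆ K)
    {g : G} (hg : g ∉ K) : repCount A B g = 0 := by
  rw [repCount, ← Set.ncard_empty G]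
  congr 1
  refine Set.eq_empty_of_forall_notMem fun a ⟨ha, hb⟩ => hg ?_
  simpa using K.add_mem (hA ha) (hB hb)

lemma repCount_image {H : Type*} [AddCommGroup H] {f : H →+ G} (hf : Function.Injective f)
    (A B : Set H) (a : H) : repCount (f '' A) (f '' B) (f a) = repCount A B a := by
  have : {x ∈ f '' A | f a - x ∈ f '' B} = f '' {y ∈ A | a - y ∈ B} := by
    ext x
    constructor
    · rintro ⟨⟨y, hy, rfl⟩, hb⟩
      rw [← map_sub, hf.mem_set_image] at hb
      exact ⟨y, ⟨hy, hb⟩, rfl⟩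
    · rintro ⟨y, ⟨hy, hb⟩, rfl⟩
      exact ⟨⟨y, hy, rfl⟩, by rw [← map_sub]; exact ⟨a - y, hb, rfl⟩⟩
  rw [repCount, repCount, this, Set.ncard_image_of_injective _ hf]

variable {Q : Type*} [AddCommGroup Q]

open Classical in
lemma repCount_preimage_right {π : G →+ Q} {A : Set G} (hA : A ⊆ π.ker) (B : Set Q) (g : G) :
    repCount A (π ⁻¹' B) g = if π g ∈ B then A.ncard else 0 := by
  have hπA : ∀ a ∈ A, π a = 0 := fun a ha => hA ha
  by_cases hg : π g ∈ B
  · rw [if_pos hg, repCount]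
    congr 1
    exact Set.sep_eq_self_iff_mem_true.2 fun a ha => by simpa [hπA a ha] using hg
  · rw [if_neg hg, repCount, ← Set.ncard_empty G]
    congr 1
    exact Set.eq_empty_of_forall_notMem fun a ⟨ha, hb⟩ => hg (by simpa [hπA a ha] using hb)

lemma AddMonoidHom.card_fiber_eq_card_ker (π : G →+ Q) {x₀ : G} :
    Nat.card {x // π x = π x₀} = Nat.card π.ker :=
  Nat.card_congr <| Equiv.subtypeEquiv (Equiv.subRight x₀) fun x => by
    simp [AddMonoidHom.mem_ker, sub_eq_zero]

lemma AddMonoidHom.ncard_preimage_of_surjective [Finite G] {π : G →+ Q}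
    (hπ : Function.Surjective π) (s : Set Q) : (π ⁻¹' s).ncard = Nat.card π.ker * s.ncard := by
  have := Finite.of_surjective π hπ
  have hfib : ∀ q, Nat.card {x // π x = q} = Nat.card π.ker := fun q => by
    obtain ⟨x₀, rfl⟩ := hπ q
    exact π.card_fiber_eq_card_ker
  rw [Set.ncard_eq_toFinset_card s s.toFinite, ← Nat.card_coe_set_eq,
    ← s.toFinite.coe_toFinset, Finset.card_preimage_eq_sum_card_image_eq fun _ _ => Set.toFinite _]
  simp [hfib, mul_comm]

lemma repCount_preimage_preimage [Finite G] {π : G →+ Q} (hπ : Function.Surjective π)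
    (B B' : Set Q) (g : G) :
    repCount (π ⁻¹' B) (π ⁻¹' B') g = Nat.card π.ker * repCount B B' (π g) := by
  have : {a ∈ π ⁻¹' B | g - a ∈ π ⁻¹' B'} = π ⁻¹' {q ∈ B | π g - q ∈ B'} := by
    ext; simp
  rw [repCount, this, π.ncard_preimage_of_surjective hπ, repCount]

lemma AddMonoidHom.preimage_image_eq_of_add_mem {π : G →+ Q} {E : Set G}
    (hE : ∀ g ∈ E, ∀ h ∈ π.ker, g + h ∈ E) : π ⁻¹' (π '' E) = E := by
  refine (Set.subset_preimage_image _ _).antisymm' ?_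
  rintro x ⟨e, he, hex⟩
  simpa using hE e he (x - e) (by simp [AddMonoidHom.mem_ker, hex])

lemma AddSubgroup.image_val_subset (K : AddSubgroup G) (C : Set K) :
    Subtype.val '' C ⊆ (K : Set G) :=
  Set.image_subset_iff.2 fun x _ => x.2

def IsSchurExtension (K : AddSubgroup G) (S : Set (Set K)) (T : Set (Set G)) : Prop :=
  IsSchurPartition T ∧
  IsBlockUnion T (K : Set G) ∧
  {C | C ∈ T ∧ C ⊆ (K : Set G)} = (fun B : Set K => ((↑) '' B : Set G)) '' S ∧
  ∀ C ∈ T, ¬ C ⊆ (K : Set G) → ∀ g ∈ C, ∀ h ∈ K, g + h ∈ C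

section Wedge

variable (π : G →+ Q)

def wedgePartition (S : Set (Set π.ker)) (P : Set (Set Q)) : Set (Set G) :=
  Set.image Subtype.val '' S ∪ Set.preimage π '' (P \ {{0}})

def quotientPartition (T : Set (Set G)) : Set (Set Q) :=
  insert {0} (Set.image π '' {E ∈ T | ¬ E ⊆ π.ker})

variable {π} {S : Set (Set π.ker)} {P : Set (Set Q)}

lemma notMem_ker_of_mem_preimage (hP : Setoid.IsPartition P) (h0 : ({0} : Set Q) ∈ P)
    {B : Set Q} (hB : B ∈ P \ {{0}}) {x : G} (hx : x ∈ π ⁻¹' B) : x ∉ π.ker := fun hxK =>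
  hB.2 (Setoid.eq_of_mem_eqv_class hP.2 hB.1 hx h0 (show π x = 0 from hxK))

lemma isPartition_wedgePartition (hπ : Function.Surjective π) (hS : Setoid.IsPartition S)
    (hP : Setoid.IsPartition P) (h0 : ({0} : Set Q) ∈ P) :
    Setoid.IsPartition (wedgePartition π S P) := by
  refine ⟨?_, fun g => ?_⟩
  · rintro (⟨C, hC, hCe⟩ | ⟨B, hB, hBe⟩)
    · exact ((Setoid.nonempty_of_mem_partition hS hC).image _).ne_empty hCe
    · exact ((Setoid.nonempty_of_mem_partition hP hB.1).preimage hπ).ne_empty hBe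
  by_cases hg : g ∈ π.ker
  · obtain ⟨C, ⟨hC, hgC⟩, huniq⟩ := hS.2 ⟨g, hg⟩
    refine ⟨_, ⟨Or.inl ⟨C, hC, rfl⟩, ⟨_, hgC, rfl⟩⟩, ?_⟩
    rintro E ⟨⟨C', hC', rfl⟩ | ⟨B, hB, rfl⟩, hgE⟩
    · obtain ⟨x, hxC', rfl⟩ := hgE
      rw [huniq C' ⟨hC', hxC'⟩]
    · exact absurd hg (notMem_ker_of_mem_preimage hP h0 hB hgE)
  · obtain ⟨B, ⟨hB, hgB⟩, huniq⟩ := hP.2 (π g)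
    have hB0 : B ≠ {0} := by rintro rfl; exact hg hgB
    refine ⟨π ⁻¹' B, ⟨Or.inr ⟨B, ⟨hB, hB0⟩, rfl⟩, hgB⟩, ?_⟩
    rintro E ⟨⟨C', hC', rfl⟩ | ⟨B', hB', rfl⟩, hgE⟩
    · obtain ⟨x, -, rfl⟩ := hgE
      exact absurd x.2 hg
    · rw [huniq B' ⟨hB'.1, hgE⟩]

lemma neg_mem_wedgePartition (hS : ∀ C ∈ S, -C ∈ S) (hP : ∀ B ∈ P, -B ∈ P) {E : Set G}
    (hE : E ∈ wedgePartition π S P) : -E ∈ wedgePartition π S P := by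
  rcases hE with ⟨C, hC, rfl⟩ | ⟨B, ⟨hB, hB0⟩, rfl⟩
  · exact Or.inl ⟨-C, hS C hC, by simpa using Set.image_neg π.ker.subtype C⟩
  · refine Or.inr ⟨-B, ⟨hP B hB, fun h => hB0 ?_⟩, by ext; simp⟩
    simpa using congrArg Neg.neg h

lemma constOnBlocks_wedgePartition_comp {α : Type*} {f : Q → α} (hf : ConstOnBlocks P f) :
    ConstOnBlocks (wedgePartition π S P) (f ∘ π) := by
  rintro E (⟨C, -, rfl⟩ | ⟨B, ⟨hB, -⟩, rfl⟩) a ha b hb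
  · obtain ⟨a, -, rfl⟩ := ha
    obtain ⟨b, -, rfl⟩ := hb
    simp [show π a = 0 from a.2, show π b = 0 from b.2]
  · exact hf B hB _ ha _ hb

lemma constOnBlocks_repCount_image_val (hP : Setoid.IsPartition P) (h0 : ({0} : Set Q) ∈ P)
    (hS : ∀ C ∈ S, ∀ C' ∈ S, ConstOnBlocks S (repCount C C')) {C C' : Set π.ker} (hC : C ∈ S)
    (hC' : C' ∈ S) :
    ConstOnBlocks (wedgePartition π S P) (repCount (Subtype.val '' C) (Subtype.val '' C')) := by
  rintro E (⟨E₀, hE₀, rfl⟩ | ⟨B, hB, rfl⟩) a ha b hb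
  · obtain ⟨a, ha, rfl⟩ := ha
    obtain ⟨b, hb, rfl⟩ := hb
    have hval := repCount_image π.ker.subtype_injective C C'
    simp only [AddSubgroup.coe_subtype] at hval
    rw [hval, hval]
    exact hS C hC C' hC' E₀ hE₀ a ha b hb
  · have hK : ∀ x ∈ π ⁻¹' B, x ∉ π.ker := fun x => notMem_ker_of_mem_preimage hP h0 hB
    have hCK := π.ker.image_val_subset C
    have hCK' := π.ker.image_val_subset C'
    rw [repCount_eq_zero_of_notMem π.ker hCK hCK' (hK a ha),
      repCount_eq_zero_of_notMem π.ker hCK hCK' (hK b hb)]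

lemma constOnBlocks_repCount_wedgePartition [Finite G] (hπ : Function.Surjective π)
    (hS : IsSchurPartition S) (hP : IsSchurPartition P) {A B : Set G}
    (hA : A ∈ wedgePartition π S P) (hB : B ∈ wedgePartition π S P) :
    ConstOnBlocks (wedgePartition π S P) (repCount A B) := by
  have := Finite.of_surjective π hπ
  obtain ⟨-, -, -, hSmul⟩ := isSchurPartition_iff.1 hS
  obtain ⟨hPpart, hP0, -, hPmul⟩ := isSchurPartition_iff.1 hP
  have hmixed : ∀ C : Set π.ker, ∀ B ∈ P \ {{0}},
      ConstOnBlocks (wedgePartition π S P) (repCount (Subtype.val '' C) (π ⁻¹' B)) := by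
    intro C B hB
    rw [funext (repCount_preimage_right (π.ker.image_val_subset C) B)]
    exact constOnBlocks_wedgePartition_comp (constOnBlocks_ite hPpart hB.1 _ _)
  rcases hA with ⟨C, hC, rfl⟩ | ⟨B₁, hB₁, rfl⟩ <;> rcases hB with ⟨C', hC', rfl⟩ | ⟨B₂, hB₂, rfl⟩
  · exact constOnBlocks_repCount_image_val hPpart hP0 hSmul hC hC'
  · exact hmixed C B₂ hB₂
  · rw [funext (repCount_comm (π ⁻¹' B₁) _)]
    exact hmixed C' B₁ hB₁
  · rw [funext (repCount_preimage_preimage hπ B₁ B₂)]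
    exact constOnBlocks_wedgePartition_comp (f := fun q => Nat.card π.ker * repCount B₁ B₂ q)
      fun E hE a ha b hb => congrArg (Nat.card π.ker * ·) (hPmul B₁ hB₁.1 B₂ hB₂.1 E hE a ha b hb)

lemma isSchurExtension_wedgePartition [Finite G] (hπ : Function.Surjective π)
    (hS : IsSchurPartition S) (hP : IsSchurPartition P) :
    IsSchurExtension π.ker S (wedgePartition π S P) := by
  have hPpart := hP.1
  have hP0 := hP.2.1
  have hpart := isPartition_wedgePartition hπ hS.1 hPpart hP0
  refine ⟨⟨hpart, Or.inl ⟨{0}, hS.2.1, by simp⟩, fun E hE => neg_mem_wedgePartition hS.2.2.1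
    hP.2.2.1 hE, fun A hA B hB => (classSum_mul_mem_closure_iff hpart A B).2
      (constOnBlocks_repCount_wedgePartition hπ hS hP hA hB)⟩, ?_, ?_, ?_⟩
  · rintro E (⟨C, -, rfl⟩ | ⟨B, hB, rfl⟩) ⟨x, hxE, hxK⟩
    · exact π.ker.image_val_subset C
    · exact absurd hxK (notMem_ker_of_mem_preimage hPpart hP0 hB hxE)
  · ext E
    constructor
    · rintro ⟨⟨C, hC, rfl⟩ | ⟨B, hB, rfl⟩, hEK⟩
      · exact ⟨C, hC, rfl⟩
      · obtain ⟨x, hx⟩ := (Setoid.nonempty_of_mem_partition hPpart hB.1).preimage hπ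
        exact absurd (hEK hx) (notMem_ker_of_mem_preimage hPpart hP0 hB hx)
    · rintro ⟨C, hC, rfl⟩
      exact ⟨Or.inl ⟨C, hC, rfl⟩, π.ker.image_val_subset C⟩
  · rintro E (⟨C, -, rfl⟩ | ⟨B, -, rfl⟩) hEK g hg h hh
    · exact absurd (π.ker.image_val_subset C) hEK
    · simpa [show π h = 0 from hh] using hg

variable {T : Set (Set G)}

lemma zero_notMem_image (hK : IsBlockUnion T π.ker) {E : Set G} (hE : E ∈ T)
    (hEK : ¬ E ⊆ π.ker) : (0 : Q) ∉ π '' E := by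
  rintro ⟨e, he, he0⟩
  exact hEK (hK E hE ⟨e, he, he0⟩)

lemma isPartition_quotientPartition (hπ : Function.Surjective π) (hT : Setoid.IsPartition T)
    (hK : IsBlockUnion T π.ker) (hsat : ∀ C ∈ T, ¬ C ⊆ π.ker → ∀ g ∈ C, ∀ h ∈ π.ker, g + h ∈ C) :
    Setoid.IsPartition (quotientPartition π T) := by
  refine ⟨?_, fun q => ?_⟩
  · rintro (h | ⟨E, ⟨hE, -⟩, h⟩)
    · exact Set.singleton_ne_empty _ h.symm
    · exact ((Setoid.nonempty_of_mem_partition hT hE).image _).ne_empty h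
  by_cases hq : q = 0
  · subst hq
    refine ⟨{0}, ⟨Set.mem_insert _ _, rfl⟩, ?_⟩
    rintro F ⟨rfl | ⟨E, ⟨hE, hEK⟩, rfl⟩, h0⟩
    · rfl
    · exact absurd h0 (zero_notMem_image hK hE hEK)
  · obtain ⟨x, rfl⟩ := hπ q
    obtain ⟨E, ⟨hE, hxE⟩, huniq⟩ := hT.2 x
    have hEK : ¬ E ⊆ π.ker := fun h => hq (h hxE)
    refine ⟨π '' E, ⟨Set.mem_insert_of_mem _ ⟨E, ⟨hE, hEK⟩, rfl⟩, x, hxE, rfl⟩, ?_⟩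
    rintro F ⟨rfl | ⟨E', ⟨hE', hE'K⟩, rfl⟩, hxF⟩
    · exact absurd hxF hq
    · have hxE' : x ∈ π ⁻¹' (π '' E') := hxF
      rw [π.preimage_image_eq_of_add_mem (hsat E' hE' hE'K)] at hxE'
      rw [huniq E' ⟨hE', hxE'⟩]

lemma neg_mem_quotientPartition (hT : ∀ C ∈ T, -C ∈ T) {B : Set Q}
    (hB : B ∈ quotientPartition π T) : -B ∈ quotientPartition π T := by
  rcases hB with rfl | ⟨E, ⟨hE, hEK⟩, rfl⟩
  · simp [quotientPartition]
  · refine Set.mem_insert_of_mem _ ⟨-E, ⟨hT E hE, fun h => hEK fun x hx => ?_⟩, Set.image_neg π E⟩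
    simpa using h (Set.neg_mem_neg.2 hx)

lemma constOnBlocks_repCount_quotientPartition [Finite G] (hπ : Function.Surjective π)
    (hT : IsSchurPartition T) (hK : IsBlockUnion T π.ker)
    (hsat : ∀ C ∈ T, ¬ C ⊆ π.ker → ∀ g ∈ C, ∀ h ∈ π.ker, g + h ∈ C) {A B : Set Q}
    (hA : A ∈ quotientPartition π T) (hB : B ∈ quotientPartition π T) :
    ConstOnBlocks (quotientPartition π T) (repCount A B) := by
  have := Finite.of_surjective π hπ
  obtain ⟨hTpart, -, -, hTmul⟩ := isSchurPartition_iff.1 hT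
  have hpart := isPartition_quotientPartition hπ hTpart hK hsat
  rcases hA with rfl | ⟨E, ⟨hE, hEK⟩, rfl⟩
  · rw [funext (repCount_singleton_zero_left B)]
    exact constOnBlocks_ite hpart hB _ _
  rcases hB with rfl | ⟨E', ⟨hE', hE'K⟩, rfl⟩
  · rw [funext (repCount_comm _ {0}), funext (repCount_singleton_zero_left _)]
    exact constOnBlocks_ite hpart (Set.mem_insert_of_mem _ ⟨E, ⟨hE, hEK⟩, rfl⟩) _ _
  have hcount : ∀ x, repCount E E' x = Nat.card π.ker * repCount (π '' E) (π '' E') (π x) := by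
    intro x
    conv_lhs => rw [← π.preimage_image_eq_of_add_mem (hsat E hE hEK),
      ← π.preimage_image_eq_of_add_mem (hsat E' hE' hE'K)]
    exact repCount_preimage_preimage hπ _ _ x
  rintro F (rfl | ⟨E'', ⟨hE'', -⟩, rfl⟩) a ha b hb
  · rw [Set.mem_singleton_iff.1 ha, Set.mem_singleton_iff.1 hb]
  · obtain ⟨g, hg, rfl⟩ := ha
    obtain ⟨g', hg', rfl⟩ := hb
    have h := hTmul E hE E' hE' E'' hE'' g hg g' hg'
    rw [hcount, hcount] at h
    exact Nat.eq_of_mul_eq_mul_left Nat.card_pos h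

lemma isSchurPartition_quotientPartition [Finite G] (hπ : Function.Surjective π)
    (hT : IsSchurPartition T) (hK : IsBlockUnion T π.ker)
    (hsat : ∀ C ∈ T, ¬ C ⊆ π.ker → ∀ g ∈ C, ∀ h ∈ π.ker, g + h ∈ C) :
    IsSchurPartition (quotientPartition π T) := by
  have := Finite.of_surjective π hπ
  exact isSchurPartition_iff.2 ⟨isPartition_quotientPartition hπ hT.1 hK hsat,
    Set.mem_insert _ _, fun B hB => neg_mem_quotientPartition hT.2.2.1 hB,
    fun A hA B hB => constOnBlocks_repCount_quotientPartition hπ hT hK hsat hA hB⟩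

lemma quotientPartition_wedgePartition (hπ : Function.Surjective π) (hP : Setoid.IsPartition P)
    (h0 : ({0} : Set Q) ∈ P) : quotientPartition π (wedgePartition π S P) = P := by
  ext B
  constructor
  · rintro (rfl | ⟨E, ⟨⟨C, -, rfl⟩ | ⟨B', hB', rfl⟩, hEK⟩, rfl⟩)
    · exact h0
    · exact absurd (π.ker.image_val_subset C) hEK
    · rw [Set.image_preimage_eq _ hπ]
      exact hB'.1
  · intro hB
    by_cases hB0 : B = {0}
    · exact hB0 ▸ Set.mem_insert _ _
    refine Set.mem_insert_of_mem _
      ⟨π ⁻¹' B, ⟨Or.inr ⟨B, ⟨hB, hB0⟩, rfl⟩, ?_⟩, Set.image_preimage_eq _ hπ⟩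
    obtain ⟨x, hx⟩ := (Setoid.nonempty_of_mem_partition hP hB).preimage hπ
    exact fun h => notMem_ker_of_mem_preimage hP h0 ⟨hB, hB0⟩ hx (h hx)

lemma wedgePartition_quotientPartition (hT : IsSchurExtension π.ker S T) :
    wedgePartition π S (quotientPartition π T) = T := by
  obtain ⟨-, hK, hTin, hsat⟩ := hT
  ext E
  constructor
  · rintro (⟨C, hC, rfl⟩ | ⟨B, ⟨rfl | ⟨E, ⟨hE, hEK⟩, rfl⟩, hB0⟩, rfl⟩)
    · have hCT : Subtype.val '' C ∈ {C | C ∈ T ∧ C ⊆ π.ker} := hTin ▸ Set.mem_image_of_mem _ hC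
      exact hCT.1
    · exact absurd rfl hB0
    · rw [π.preimage_image_eq_of_add_mem (hsat E hE hEK)]
      exact hE
  · intro hE
    by_cases hEK : E ⊆ π.ker
    · have hET : E ∈ {C | C ∈ T ∧ C ⊆ π.ker} := ⟨hE, hEK⟩
      rw [hTin] at hET
      exact Or.inl hET
    refine Or.inr ⟨π '' E, ⟨Set.mem_insert_of_mem _ ⟨E, ⟨hE, hEK⟩, rfl⟩, fun h => ?_⟩,
      π.preimage_image_eq_of_add_mem (hsat E hE hEK)⟩
    exact zero_notMem_image hK hE hEK (h ▸ Set.mem_singleton 0)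

def schurExtensionEquiv [Finite G] (hπ : Function.Surjective π) (hS : IsSchurPartition S) :
    {T // IsSchurExtension π.ker S T} ≃ {P : Set (Set Q) // IsSchurPartition P} where
  toFun T := ⟨quotientPartition π T, isSchurPartition_quotientPartition hπ T.2.1 T.2.2.1 T.2.2.2.2⟩
  invFun P := ⟨wedgePartition π S P, isSchurExtension_wedgePartition hπ hS P.2⟩
  left_inv T := Subtype.ext (wedgePartition_quotientPartition T.2)
  right_inv P := Subtype.ext (quotientPartition_wedgePartition hπ P.2.1 P.2.2.1)

end Wedge

lemma ZMod.exists_surjective_ker_eq {n d : ℕ} [NeZero n] (D : AddSubgroup (ZMod n))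
    (hD : Nat.card D = d) :
    ∃ π : ZMod n →+ ZMod (n / d), Function.Surjective π ∧ π.ker = D := by
  have hcard : Nat.card (ZMod n ⧸ D) = Nat.card (ZMod (n / d)) := by
    rw [Nat.card_zmod, ← AddSubgroup.index, eq_comm, ← hD]
    refine Nat.div_eq_of_eq_mul_left Nat.card_pos ?_
    rw [AddSubgroup.index_mul_card, Nat.card_zmod]
  have := isAddCyclic_of_surjective _ (QuotientAddGroup.mk'_surjective D)
  let e := addEquivOfAddCyclicCardEq hcard
  refine ⟨e.toAddMonoidHom.comp (QuotientAddGroup.mk' D),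
    e.surjective.comp (QuotientAddGroup.mk'_surjective D), ?_⟩
  ext x
  simp

theorem wedge_over_primitive_count_general (n d : ℕ) (hn : 0 < n)
    (D : AddSubgroup (ZMod n)) (hD : Nat.card D = d)
    (S : Set (Set D)) (hS : IsSchurPartition S) :
    Nat.card {T : Set (Set (ZMod n)) //
        IsSchurPartition T ∧
        IsBlockUnion T (D : Set (ZMod n)) ∧
        {C | C ∈ T ∧ C ⊆ (D : Set (ZMod n))} =
          (fun B : Set D => ((↑) '' B : Set (ZMod n))) '' S ∧
        ∀ C ∈ T, ¬ C ⊆ (D : Set (ZMod n)) → ∀ g ∈ C, ∀ h ∈ D, g + h ∈ C} =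
      Omega (n / d) := by
  have : NeZero n := ⟨hn.ne'⟩
  obtain ⟨π, hπ, rfl⟩ := ZMod.exists_surjective_ker_eq D hD
  exact Nat.card_congr (schurExtensionEquiv hπ hS)

/-- If `S` is a primitive Schur partition of the subgroup `D` of order `d` of `ℤ/nℤ`,
then the number of Schur partitions of `ℤ/nℤ` restricting to `S` on `D` and whose blocks
outside `D` are unions of cosets of `D` equals `Ω(n/d)`. -/
theorem wedge_over_primitive_count (n d : ℕ) (hn : 0 < n) (hd : 0 < d) (hdvd : d ∣ n)
    (D : AddSubgroup (ZMod n)) (hD : Nat.card D = d)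
    (S : Set (Set D)) (hS : IsSchurPartition S)
    (hprim : ∀ H : AddSubgroup D, IsBlockUnion S (H : Set D) → H = ⊥ ∨ H = ⊤) :
    Nat.card {T : Set (Set (ZMod n)) //
        IsSchurPartition T ∧
        IsBlockUnion T (D : Set (ZMod n)) ∧
        {C | C ∈ T ∧ C ⊆ (D : Set (ZMod n))} =
          (fun B : Set D => ((↑) '' B : Set (ZMod n))) '' S ∧
        ∀ C ∈ T, ¬ C ⊆ (D : Set (ZMod n)) → ∀ g ∈ C, ∀ h ∈ D, g + h ∈ C} =
      Omega (n / d) :=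
  wedge_over_primitive_count_general n d hn D hD S hS
end

section
/- Let n ≥ 1. The map sending each subgroup H of the unit group (ℤ/nℤ)ˣ to the partition of ℤ/nℤ into orbits of H (acting by multiplication) is injective, and each such orbit partition is a Schur partition. Consequently, the number of automorphic Schur partitions of ℤ/nℤ equals the number of subgroups of (ℤ/nℤ)ˣ. -/
/-!
The Schur property holds for the orbits of any group `H` acting by additive automorphisms on a
finite abelian group `G`. The orbit of `0` is `{0}`, and negation maps the orbit of `a` to that of
`-a`. For orbits `C`, `D` the coefficient of `z` in `classSum C * classSum D` is the number of
pairs `(c, d) ∈ C × D` with `c + d = z`; as `C` and `D` are `H`-stable, `p ↦ h • p` matches the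
pairs for `z` with those for `h • z`, so these natural numbers are constant on orbits and the
product is an `ℕ`-combination of orbit sums. For `H ≤ (ℤ/nℤ)ˣ` the orbit of `1` is `H` itself,
which gives injectivity.
-/

open scoped Pointwise

/-- The partition of `ℤ/nℤ` into orbits of the subgroup `H ≤ (ℤ/nℤ)ˣ` acting by
multiplication. -/
def orbitPartition (n : ℕ) (H : Subgroup (ZMod n)ˣ) : Set (Set (ZMod n)) :=
  {C : Set (ZMod n) | ∃ a : ZMod n, C = {x : ZMod n | ∃ u ∈ H, (u : ZMod n) * a = x}}

open Finset MulAction AddMonoidAlgebra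

section ClassSum

variable {G : Type*} [AddCommGroup G] [Fintype G]

theorem classSum_eq_sum_filter (C : Set G) [DecidablePred (· ∈ C)] :
    classSum C = ∑ g with g ∈ C, single g (1 : ℚ) := by
  rw [classSum, ← finsum_mem_coe_finset]
  simp

theorem classSum_mul_classSum [DecidableEq G] (C D : Set G) [DecidablePred (· ∈ C)]
    [DecidablePred (· ∈ D)] :
    classSum C * classSum D =
      ∑ z, single z (#{p : G × G | p.1 ∈ C ∧ p.2 ∈ D ∧ p.1 + p.2 = z} : ℚ) := by
  rw [classSum_eq_sum_filter, classSum_eq_sum_filter, sum_mul_sum, ← sum_product']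
  simp_rw [single_mul_single, one_mul]
  rw [← sum_fiberwise _ (fun p => p.1 + p.2)]
  refine sum_congr rfl fun z _ => ?_
  rw [sum_congr rfl fun p hp => by rw [(mem_filter.mp hp).2], sum_const,
    ← Nat.cast_smul_eq_nsmul ℚ, smul_single', mul_one]
  congr 3
  ext p
  simp [and_assoc]

theorem sum_single_mem_closure_classSum_classes (r : Setoid G) (f : G → ℕ)
    (hf : ∀ x y, r x y → f x = f y) :
    ∑ z, single z (f z : ℚ) ∈ AddSubmonoid.closure (classSum '' r.classes) := by
  classical
  rw [← sum_fiberwise univ (Quotient.mk r)]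
  refine AddSubmonoid.sum_mem _ fun q _ => ?_
  obtain ⟨y, rfl⟩ := Quotient.exists_rep q
  have hfiber : ∑ z with Quotient.mk r z = Quotient.mk r y, single z (f z : ℚ) =
      f y • classSum {x | r x y} := by
    rw [classSum_eq_sum_filter, smul_sum]
    refine sum_congr (by simp [Quotient.eq]) fun z hz => ?_
    rw [hf z y (mem_filter.mp hz).2, ← Nat.cast_smul_eq_nsmul ℚ, smul_single', mul_one]
  rw [hfiber]
  exact AddSubmonoid.nsmul_mem _
    (AddSubmonoid.subset_closure (Set.mem_image_of_mem classSum (r.mem_classes y))) _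

end ClassSum

section OrbitPartition

variable {H G : Type*} [Group H] [AddCommGroup G] [DistribMulAction H G]

theorem singleton_zero_mem_orbitRel_classes : ({0} : Set G) ∈ (orbitRel H G).classes :=
  ⟨0, by ext x; simp [orbitRel_apply, mem_orbit_iff, eq_comm]⟩

theorem neg_mem_orbitRel_classes {C : Set G} (hC : C ∈ (orbitRel H G).classes) :
    -C ∈ (orbitRel H G).classes := by
  obtain ⟨y, rfl⟩ := hC
  refine ⟨-y, ?_⟩
  ext x
  simp [orbitRel_apply, mem_orbit_iff, smul_neg, neg_eq_iff_eq_neg]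

theorem smul_mem_iff_of_mem_orbitRel_classes {C : Set G} (hC : C ∈ (orbitRel H G).classes)
    (h : H) {x : G} : h • x ∈ C ↔ x ∈ C := by
  obtain ⟨y, rfl⟩ := hC
  simp only [Set.mem_ofPred_eq, orbitRel_apply]
  rw [← smul_orbit h y, Set.smul_mem_smul_set_iff, smul_orbit]

theorem card_addRepresentations_smul [Fintype G] [DecidableEq G] {C D : Set G}
    [DecidablePred (· ∈ C)] [DecidablePred (· ∈ D)]
    (hC : C ∈ (orbitRel H G).classes) (hD : D ∈ (orbitRel H G).classes) (h : H) (z : G) :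
    #{p : G × G | p.1 ∈ C ∧ p.2 ∈ D ∧ p.1 + p.2 = h • z} =
      #{p : G × G | p.1 ∈ C ∧ p.2 ∈ D ∧ p.1 + p.2 = z} := by
  symm
  rw [← card_smul_finset h]
  congr 1
  ext p
  rw [← Finset.inv_smul_mem_iff]
  simp only [mem_filter, mem_univ, true_and, Prod.smul_fst, Prod.smul_snd,
    smul_mem_iff_of_mem_orbitRel_classes hC, smul_mem_iff_of_mem_orbitRel_classes hD, ← smul_add,
    inv_smul_eq_iff]

theorem isSchurPartition_orbitRel_classes [Finite G] :
    IsSchurPartition (orbitRel H G).classes := by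
  classical
  have := Fintype.ofFinite G
  refine ⟨Setoid.isPartition_classes _, singleton_zero_mem_orbitRel_classes,
    fun C hC => neg_mem_orbitRel_classes hC, fun C hC D hD => ?_⟩
  rw [classSum_mul_classSum]
  refine sum_single_mem_closure_classSum_classes _ _ fun x y hxy => ?_
  obtain ⟨h, rfl⟩ := hxy
  exact card_addRepresentations_smul hC hD h y

end OrbitPartition

theorem orbitPartition_eq_orbitRel_classes (n : ℕ) (H : Subgroup (ZMod n)ˣ) :
    orbitPartition n H = (orbitRel H (ZMod n)).classes := by
  ext C
  simp [orbitPartition, Setoid.classes, orbitRel_apply, mem_orbit_iff, Subgroup.smul_def,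
    Units.smul_def]

theorem orbitRel_subgroup_units_injective {R : Type*} [Monoid R] :
    Function.Injective fun H : Subgroup Rˣ => orbitRel H R := by
  intro H K hHK
  have key (L : Subgroup Rˣ) (u : Rˣ) : u ∈ L ↔ orbitRel L R u 1 := by
    simp [orbitRel_apply, mem_orbit_iff, Subgroup.smul_def, Units.smul_def, Units.val_inj]
  ext u
  rw [key, key]
  exact Setoid.ext_iff.mp hHK _ _

/-- The map `H ↦ orbit partition of H` is injective, each orbit partition is a Schur
partition, and so the number of automorphic Schur partitions of `ℤ/nℤ` equals the number
of subgroups of `(ℤ/nℤ)ˣ`. -/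
theorem automorphic_schur_count (n : ℕ) (hn : 0 < n) :
    Function.Injective (orbitPartition n) ∧
    (∀ H : Subgroup (ZMod n)ˣ, IsSchurPartition (orbitPartition n H)) ∧
    Nat.card {P : Set (Set (ZMod n)) // ∃ H : Subgroup (ZMod n)ˣ, P = orbitPartition n H} =
      Nat.card (Subgroup (ZMod n)ˣ) := by
  have : NeZero n := ⟨hn.ne'⟩
  have hinj : Function.Injective (orbitPartition n) := fun H K hHK =>
    orbitRel_subgroup_units_injective <| Setoid.classes_inj.mpr <| by
      simpa only [orbitPartition_eq_orbitRel_classes] using hHK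
  refine ⟨hinj, fun H => ?_, ?_⟩
  · rw [orbitPartition_eq_orbitRel_classes]
    exact isSchurPartition_orbitRel_classes
  · exact Nat.card_congr <| .symm <| (Equiv.ofInjective _ hinj).trans <|
      Equiv.subtypeEquivRight fun P => by simp only [Set.mem_range, eq_comm]
end
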